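/- Let u : [0,T] → ℝ≥0 be a continuous function with u(t) > 0 for t > 0, and suppose there exist constants c > 0 and 0 < p < 1 such that ∫₀ᵗ c·u(s)^p ds ≤ u(t) for all t ∈ [0,T]. Then there exists a constant c' > 0 (depending only on c and p) such that u(t) ≥ c'·t^(1/(1-p)) for all t ∈ [0,T]. -/

import Mathlib

/-!
Put `F t = ∫₀ᵗ c u(s)^p ds`. Then `F ≤ u`, so `F' = c u^p ≥ c F^p`, and for `F > 0` this says
`(F^(1-p))' = (1-p) F^(-p) F' ≥ (1-p) c`. Since `F 0 = 0`, integrating gives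
`F t ^ (1-p) ≥ (1-p) c t`, i.e. `u t ≥ F t ≥ ((1-p) c)^(1/(1-p)) t^(1/(1-p))`.
-/

open MeasureTheory Set

section

variable {a b c p : ℝ}

theorem mul_sub_le_rpow_one_sub_of_le_hasDerivAt {F F' : ℝ → ℝ} (hp : p < 1)
    (hF : ContinuousOn F (Icc a b)) (hFa : F a = 0) (hFpos : ∀ t ∈ Ioo a b, 0 < F t)
    (hF' : ∀ t ∈ Ioo a b, HasDerivAt F (F' t) t) (hle : ∀ t ∈ Ioo a b, c * F t ^ p ≤ F' t) :
    ∀ t ∈ Icc a b, (1 - p) * c * (t - a) ≤ F t ^ (1 - p) := by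
  have hq : 0 < 1 - p := sub_pos.2 hp
  have hmono : MonotoneOn (fun t => F t ^ (1 - p) - (1 - p) * c * (t - a)) (Icc a b) := by
    refine monotoneOn_of_hasDerivWithinAt_nonneg (convex_Icc a b)
      (f' := fun t => F' t * (1 - p) * F t ^ (1 - p - 1) - (1 - p) * c * 1)
      ((hF.rpow_const fun _ _ => Or.inr hq.le).sub (by fun_prop)) (fun t ht => ?_) (fun t ht => ?_)
    all_goals rw [interior_Icc] at ht
    · exact (((hF' t ht).rpow_const (Or.inl (hFpos t ht).ne')).sub
        (((hasDerivAt_id t).sub_const a).const_mul _)).hasDerivWithinAt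
    · have hFt := hFpos t ht
      have hc : c ≤ F' t * F t ^ (1 - p - 1) := by
        rw [sub_sub_cancel_left, Real.rpow_neg hFt.le, ← div_eq_mul_inv,
          le_div_iff₀ (Real.rpow_pos_of_pos hFt p)]
        exact hle t ht
      nlinarith [mul_le_mul_of_nonneg_left hc hq.le]
  intro t ht
  simpa [hFa, Real.zero_rpow hq.ne'] using hmono ⟨le_rfl, ht.1.trans ht.2⟩ ht ht.1

variable {g : ℝ → ℝ}

theorem intervalIntegral_pos_of_continuousOn_of_pos_on_Ioo (hg : ContinuousOn g (Icc a b))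
    (hpos : ∀ s ∈ Ioo a b, 0 < g s) : ∀ t ∈ Ioc a b, 0 < ∫ s in a..t, g s := fun _ ht =>
  intervalIntegral.intervalIntegral_pos_of_pos_on
    ((hg.mono (Icc_subset_Icc_right ht.2)).intervalIntegrable_of_Icc ht.1.le)
    (fun s hs => hpos s ⟨hs.1, hs.2.trans_le ht.2⟩) ht.1

theorem mul_sub_le_integral_rpow_one_sub (hp : p < 1) (hg : ContinuousOn g (Icc a b))
    (hpos : ∀ s ∈ Ioo a b, 0 < g s) (hle : ∀ t ∈ Ioo a b, c * (∫ s in a..t, g s) ^ p ≤ g t) :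
    ∀ t ∈ Icc a b, (1 - p) * c * (t - a) ≤ (∫ s in a..t, g s) ^ (1 - p) := by
  refine mul_sub_le_rpow_one_sub_of_le_hasDerivAt hp ?_ intervalIntegral.integral_same
    (fun t ht => intervalIntegral_pos_of_continuousOn_of_pos_on_Ioo hg hpos t ⟨ht.1, ht.2.le⟩)
    (fun t ht => ?_) hle
  · exact (intervalIntegral.continuousOn_primitive hg.integrableOn_Icc).congr
      fun _ ht => intervalIntegral.integral_of_le ht.1
  · exact intervalIntegral.integral_hasDerivAt_right
      ((hg.mono (Icc_subset_Icc_right ht.2.le)).intervalIntegrable_of_Icc ht.1.le)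
      ((hg.mono Ioo_subset_Icc_self).stronglyMeasurableAtFilter isOpen_Ioo t ht)
      (hg.continuousAt (Icc_mem_nhds ht.1 ht.2))

end

theorem stmt_0_general (T : ℝ) (u : ℝ → ℝ)
    (hu_cont : ContinuousOn u (Icc 0 T))
    (hu_pos : ∀ t ∈ Ioc (0:ℝ) T, 0 < u t)
    (c p : ℝ) (hc : 0 < c) (hp0 : 0 < p) (hp1 : p < 1)
    (hint : ∀ t ∈ Icc (0:ℝ) T, ∫ s in Ioc (0:ℝ) t, c * u s ^ p ≤ u t) :
    ∃ c' : ℝ, 0 < c' ∧ ∀ t ∈ Icc (0:ℝ) T, c' * t ^ (1 / (1 - p)) ≤ u t := by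
  have hq : 0 < 1 - p := sub_pos.2 hp1
  have hg : ContinuousOn (fun s => c * u s ^ p) (Icc 0 T) :=
    continuousOn_const.mul (hu_cont.rpow_const fun _ _ => Or.inr hp0.le)
  have hgpos : ∀ s ∈ Ioo 0 T, 0 < c * u s ^ p := fun s hs =>
    mul_pos hc (Real.rpow_pos_of_pos (hu_pos s (Ioo_subset_Ioc_self hs)) p)
  have hFpos := intervalIntegral_pos_of_continuousOn_of_pos_on_Ioo hg hgpos
  have hFu : ∀ t ∈ Icc 0 T, ∫ s in (0:ℝ)..t, c * u s ^ p ≤ u t := fun t ht => by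
    rw [intervalIntegral.integral_of_le ht.1]
    exact hint t ht
  have hF := mul_sub_le_integral_rpow_one_sub hp1 hg hgpos fun t ht =>
    mul_le_mul_of_nonneg_left (Real.rpow_le_rpow (hFpos t ⟨ht.1, ht.2.le⟩).le
      (hFu t (Ioo_subset_Icc_self ht)) hp0.le) hc.le
  refine ⟨((1 - p) * c) ^ (1 / (1 - p)), by positivity, fun t ht => ?_⟩
  have hFnonneg : 0 ≤ ∫ s in (0:ℝ)..t, c * u s ^ p := by
    rcases ht.1.eq_or_lt with rfl | ht0
    · rw [intervalIntegral.integral_same]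
    · exact (hFpos t ⟨ht0, ht.2⟩).le
  calc ((1 - p) * c) ^ (1 / (1 - p)) * t ^ (1 / (1 - p))
      = ((1 - p) * c * (t - 0)) ^ (1 - p)⁻¹ := by
        rw [sub_zero, one_div, Real.mul_rpow (by positivity) ht.1]
    _ ≤ ∫ s in (0:ℝ)..t, c * u s ^ p :=
        (Real.rpow_inv_le_iff_of_pos (by have := ht.1; positivity) hFnonneg hq).2 (hF t ht)
    _ ≤ u t := hFu t ht

/-- **Reverse Gronwall inequality.** If a continuous nonnegative function `u` on `[0,T]`,
positive for `t > 0`, satisfies `∫₀ᵗ c·u(s)^p ds ≤ u(t)` for constants `c > 0`, `0 < p < 1`,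
then `u(t) ≥ c'·t^(1/(1-p))` for a constant `c' > 0` depending only on `c` and `p`. -/
theorem stmt_0 (T : ℝ) (hT : 0 < T) (u : ℝ → ℝ)
    (hu_cont : ContinuousOn u (Icc 0 T))
    (hu_nonneg : ∀ t ∈ Icc (0:ℝ) T, 0 ≤ u t)
    (hu_pos : ∀ t ∈ Ioc (0:ℝ) T, 0 < u t)
    (c p : ℝ) (hc : 0 < c) (hp0 : 0 < p) (hp1 : p < 1)
    (hint : ∀ t ∈ Icc (0:ℝ) T, ∫ s in Ioc (0:ℝ) t, c * u s ^ p ≤ u t) :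
    ∃ c' : ℝ, 0 < c' ∧ ∀ t ∈ Icc (0:ℝ) T, c' * t ^ (1 / (1 - p)) ≤ u t :=
  stmt_0_general T u hu_cont hu_pos c p hc hp0 hp1 hint
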